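/- arXiv:math/0703290 — 4 statements merged into one kernel-verified Lean document; each statement's English description precedes it below -/
import Mathlib

section
/- Let L be an algebraically closed field, let G ∈ L[X,Y] be an irreducible polynomial with G(0,0) = 0 and ∂G/∂Y(0,0) ≠ 0, and let η ∈ L⟦T⟧ be a formal power series with zero constant term such that G(T, η(T)) = 0 in L⟦T⟧. Then for every polynomial F ∈ L[X,Y], the power series F(T, η(T)) is identically zero if and only if G divides F in L[X,Y]. -/
/-!
View `L[X,Y]` as `L[X][Y]` and `F(T, η(T))` as the evaluation at `η` along the injection
`L[X] ↪ L⟦T⟧`. Since `G(T, η) = 0`, `G` has positive degree in `Y`, so the irreducible `G` is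
primitive and, by Gauss's lemma, stays irreducible over `L(X)`. If `F(T, η) = 0`, then `G` and `F` cannot be coprime over `L(X)`: a Bézout identity
`uG + vF = 1`, evaluated at `η` in the fraction field of `L⟦T⟧`, would give `0 = 1`. Hence
`G ∣ F` over `L(X)`, and Gauss's lemma for the primitive `G` brings this back to `L[X][Y]`.
-/

open Polynomial

theorem Irreducible.dvd_of_eval₂_eq_zero {K A : Type*} [Field K] [CommRing A] [Nontrivial A]
    {ψ : K →+* A} {a : A} {g f : K[X]} (hg : Irreducible g) (hga : g.eval₂ ψ a = 0)
    (hfa : f.eval₂ ψ a = 0) : g ∣ f := by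
  by_contra hgf
  obtain ⟨u, v, huv⟩ := hg.coprime_iff_not_dvd.mpr hgf
  have := congrArg (eval₂ ψ a) huv
  simp [eval₂_add, eval₂_mul, hga, hfa] at this

theorem Irreducible.dvd_of_eval₂_eq_zero_of_injective {R S : Type*} [CommRing R] [IsDomain R]
    [IsGCDMonoid R] [CommRing S] [IsDomain S] {φ : R →+* S} (hφ : Function.Injective φ) {s : S}
    {g f : R[X]} (hg : Irreducible g) (hgs : g.eval₂ φ s = 0) (hfs : f.eval₂ φ s = 0) :
    g ∣ f := by
  have hprim : g.IsPrimitive :=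
    hg.isPrimitive (natDegree_pos_of_eval₂_root hg.ne_zero φ hgs
      fun x hx => hφ (by rw [hx, map_zero])).ne'
  have hιφ : Function.Injective ((algebraMap S (FractionRing S)).comp φ) :=
    (IsFractionRing.injective S _).comp hφ
  obtain ⟨ψ, hψ⟩ : ∃ ψ : FractionRing R →+* FractionRing S,
      ψ.comp (algebraMap R _) = (algebraMap S _).comp φ :=
    ⟨IsFractionRing.lift hιφ,
      RingHom.ext (IsFractionRing.lift_algebraMap (K := FractionRing R) hιφ)⟩
  have eval_map (p : R[X]) : (p.map (algebraMap R _)).eval₂ ψ (algebraMap S _ s) =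
      algebraMap S (FractionRing S) (p.eval₂ φ s) := by
    rw [eval₂_map, hψ, hom_eval₂]
  refine hprim.dvd_of_fraction_map_dvd_fraction_map (K := FractionRing R) ?_
  refine ((hprim.irreducible_iff_irreducible_map_fraction_map).mp hg).dvd_of_eval₂_eq_zero
    (ψ := ψ) (a := algebraMap S _ s) ?_ ?_
  · rw [eval_map, hgs, map_zero]
  · rw [eval_map, hfs, map_zero]

theorem Polynomial.Bivariate.aeval_equivMvPolynomial {R A : Type*} [CommSemiring R] [CommSemiring A]
    [Algebra R A] (x y : A) (p : R[X][X]) :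
    MvPolynomial.aeval ![x, y] (Bivariate.equivMvPolynomial R p) =
      p.eval₂ (Polynomial.aeval x).toRingHom y := by
  induction p using Polynomial.induction_on' with
  | add p q hp hq => simp [hp, hq]
  | monomial n a =>
    induction a using Polynomial.induction_on' with
    | add a b ha hb => simp_all
    | monomial m r => simp [Bivariate.equivMvPolynomial]

theorem Polynomial.aeval_powerSeries_X_eq_coe {R : Type*} [CommSemiring R] (p : R[X]) :
    aeval (PowerSeries.X : PowerSeries R) p = p := by
  rw [aeval_def, PowerSeries.algebraMap_eq, eval₂_C_X_eq_coe]

theorem power_series_branch_vanishing_iff_divisible_general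
    {L : Type*} [Field L]
    (G : MvPolynomial (Fin 2) L) (hGirr : Irreducible G)
    (η : PowerSeries L)
    (hGη : MvPolynomial.aeval ![PowerSeries.X, η] G = 0)
    (F : MvPolynomial (Fin 2) L) :
    MvPolynomial.aeval ![PowerSeries.X, η] F = 0 ↔ G ∣ F := by
  refine ⟨fun hFη => ?_, fun ⟨H, hH⟩ => by rw [hH, map_mul, hGη, zero_mul]⟩
  let e := Bivariate.equivMvPolynomial L
  obtain ⟨g, rfl⟩ := e.surjective G
  obtain ⟨f, rfl⟩ := e.surjective F
  rw [Bivariate.aeval_equivMvPolynomial] at hGη hFη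
  have hX : Function.Injective (aeval (PowerSeries.X : PowerSeries L)) := fun p q h =>
    coe_injective L (by rwa [aeval_powerSeries_X_eq_coe, aeval_powerSeries_X_eq_coe] at h)
  exact map_dvd e (((MulEquiv.irreducible_iff e).mp hGirr).dvd_of_eval₂_eq_zero_of_injective
    hX hGη hFη)

/-- Let `L` be an algebraically closed field, `G ∈ L[X,Y]` an irreducible
polynomial with `G(0,0) = 0` and `∂G/∂Y(0,0) ≠ 0`, and `η ∈ L⟦T⟧` a formal power series with
zero constant term such that `G(T, η(T)) = 0`.  Then for every `F ∈ L[X,Y]`, the power series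
`F(T, η(T))` is identically zero iff `G` divides `F` in `L[X,Y]`. -/
theorem power_series_branch_vanishing_iff_divisible
    {L : Type*} [Field L] [IsAlgClosed L]
    (G : MvPolynomial (Fin 2) L) (hGirr : Irreducible G)
    (hG0 : MvPolynomial.eval (fun _ => (0 : L)) G = 0)
    (hGY : MvPolynomial.eval (fun _ => (0 : L)) (MvPolynomial.pderiv 1 G) ≠ 0)
    (η : PowerSeries L) (hη : PowerSeries.constantCoeff η = 0)
    (hGη : MvPolynomial.aeval ![PowerSeries.X, η] G = 0)
    (F : MvPolynomial (Fin 2) L) :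
    MvPolynomial.aeval ![PowerSeries.X, η] F = 0 ↔ G ∣ F :=
  power_series_branch_vanishing_iff_divisible_general G hGirr η hGη F
end

section
/- Let L be an algebraically closed field, let G ∈ L[X,Y] be an irreducible polynomial with G(0,0) = 0 and ∂G/∂Y(0,0) ≠ 0, let A = L[X,Y]/(G), and let m be the maximal ideal of A generated by the images of X and Y. Then the localization A_m is a discrete valuation ring whose maximal ideal is generated by the image of X (i.e., X is a uniformising parameter at the non-singular point (0,0) of the curve G = 0). -/
/-!
Since `G(0,0) = 0`, write `G = K·X + H·Y`; then `H(0,0) = ∂G/∂Y(0,0) ≠ 0`, so `H` is a unit in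
the localization of `L[X,Y]` at `(X,Y)` and the maximal ideal `(X,Y)` there equals `(X,G)`.
Modulo the prime `G` it becomes `(X)`, and `X` survives because `G ∤ X`: comparing the
derivatives of `X = c·G` at the origin in `Y` and then in `X` gives `c(0,0) = 0` and `1 = 0`.
A Noetherian local domain whose maximal ideal is principal and nonzero is a DVR.
-/

/-- The multiplicative set of polynomials in `L[X,Y]` that do not vanish at the origin,
i.e. the complement of the maximal ideal `(X,Y)`. -/
def constNonzero (L : Type*) [Field L] : Submonoid (MvPolynomial (Fin 2) L) where
  carrier := {f | MvPolynomial.eval (fun _ => (0 : L)) f ≠ 0}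
  one_mem' := by simp
  mul_mem' := by
    intro f g hf hg
    simp only [Set.mem_setOf_eq, map_mul] at *
    exact mul_ne_zero hf hg

/-- The local ring `A_m` of the plane curve `G = 0` at the origin: the localization of
`A = L[X,Y]/(G)` at the maximal ideal `m = (X,Y)`, realized as a quotient of the localization
of `L[X,Y]` at the complement of `(X,Y)`. -/
abbrev curveLocalRing (L : Type*) [Field L] (G : MvPolynomial (Fin 2) L) : Type _ :=
  Localization (constNonzero L) ⧸
    Ideal.span {algebraMap (MvPolynomial (Fin 2) L) (Localization (constNonzero L)) G}

open MvPolynomial IsLocalRing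

theorem Ideal.span_pair_eq_of_eq_mul_add_mul {R : Type*} [CommRing R] {x y z a b : R}
    (hz : z = a * x + b * y) (hb : IsUnit b) : Ideal.span {x, z} = Ideal.span {x, y} := by
  rw [hz, add_comm, Ideal.span_pair_add_mul_left, Ideal.span_insert, Ideal.span_insert,
    Ideal.span_singleton_mul_left_unit hb]

theorem IsDiscreteValuationRing.of_maximalIdeal_eq_span_singleton {R : Type*} [CommRing R]
    [IsNoetherianRing R] [IsLocalRing R] [IsDomain R] {x : R} (hx : x ≠ 0)
    (h : IsLocalRing.maximalIdeal R = Ideal.span {x}) : IsDiscreteValuationRing R := by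
  have hR : ¬IsField R := by
    rwa [isField_iff_maximalIdeal_eq, h, Ideal.span_singleton_eq_bot]
  have hp : (IsLocalRing.maximalIdeal R).IsPrincipal := ⟨x, h⟩
  exact ((IsDiscreteValuationRing.TFAE R hR).out 0 4).mpr hp

theorem IsLocalRing.maximalIdeal_quotient_span_singleton {R : Type*} [CommRing R] [IsLocalRing R]
    {x g : R} [IsLocalRing (R ⧸ Ideal.span {g})] (h : maximalIdeal R = Ideal.span {x, g}) :
    maximalIdeal (R ⧸ Ideal.span {g}) = Ideal.span {Ideal.Quotient.mk _ x} := by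
  rw [← map_maximalIdeal_of_surjective _ Ideal.Quotient.mk_surjective, h, Ideal.map_span,
    Set.image_pair, Ideal.Quotient.mk_singleton_self, Set.pair_comm, Ideal.span_insert_zero]

namespace MvPolynomial

variable {σ R : Type*} [CommRing R]

theorem ker_constantCoeff_eq_idealOfVars :
    RingHom.ker (constantCoeff : MvPolynomial σ R →+* R) = idealOfVars σ R := by
  ext p
  rw [RingHom.mem_ker, ← pow_one (idealOfVars σ R), mem_pow_idealOfVars_iff']
  simp [Finsupp.degree_eq_zero_iff, constantCoeff_eq]

theorem not_dvd_X_of_constantCoeff_pderiv_ne_zero [IsDomain R] {p : MvPolynomial σ R} {i j : σ}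
    (hij : i ≠ j) (hp : constantCoeff p = 0) (hpj : constantCoeff (pderiv j p) ≠ 0) :
    ¬p ∣ X i := by
  rintro ⟨c, hc⟩
  rw [mul_comm] at hc
  have hc0 : constantCoeff c = 0 := by
    simpa [pderiv_X_of_ne hij, hp, hpj] using congrArg (fun q => constantCoeff (pderiv j q)) hc
  simpa [hp, hc0] using congrArg (fun q => constantCoeff (pderiv i q)) hc

theorem range_X_fin_two : Set.range (X : Fin 2 → MvPolynomial (Fin 2) R) = {X 0, X 1} := by
  ext
  simp [Fin.exists_fin_two, eq_comm]

theorem exists_eq_mul_X_add_mul_X {p : MvPolynomial (Fin 2) R} (hp : constantCoeff p = 0) :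
    ∃ K H, p = K * X 0 + H * X 1 ∧ constantCoeff H = constantCoeff (pderiv 1 p) := by
  have hmem : p ∈ Ideal.span {X 0, X 1} := by
    rwa [← range_X_fin_two, ← idealOfVars, ← ker_constantCoeff_eq_idealOfVars]
  obtain ⟨K, H, rfl⟩ := Ideal.mem_span_pair.mp hmem
  exact ⟨K, H, rfl, by simp⟩

end MvPolynomial

section CurveLocalRing

variable {L : Type*} [Field L]

attribute [local instance] RingHom.ker_isPrime

theorem mem_constNonzero {f : MvPolynomial (Fin 2) L} :
    f ∈ constNonzero L ↔ constantCoeff f ≠ 0 := by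
  rw [← eval_zero']
  rfl

instance : IsLocalization.AtPrime (Localization (constNonzero L))
    (RingHom.ker (constantCoeff : MvPolynomial (Fin 2) L →+* L)) := by
  have : constNonzero L = (RingHom.ker constantCoeff).primeCompl := by
    ext f
    rw [mem_constNonzero, Ideal.mem_primeCompl_iff, RingHom.mem_ker]
  rw [IsLocalization.AtPrime, ← this]
  infer_instance

instance : IsLocalRing (Localization (constNonzero L)) :=
  IsLocalization.AtPrime.isLocalRing _
    (RingHom.ker (constantCoeff : MvPolynomial (Fin 2) L →+* L))

theorem maximalIdeal_localization_constNonzero_eq_span_X :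
    maximalIdeal (Localization (constNonzero L)) =
      Ideal.span {algebraMap _ (Localization (constNonzero L)) (X 0 : MvPolynomial (Fin 2) L),
        algebraMap _ _ (X 1 : MvPolynomial (Fin 2) L)} := by
  rw [← IsLocalization.AtPrime.map_eq_maximalIdeal
      (RingHom.ker (constantCoeff : MvPolynomial (Fin 2) L →+* L)),
    ker_constantCoeff_eq_idealOfVars, idealOfVars, range_X_fin_two, Ideal.map_span, Set.image_pair]

theorem maximalIdeal_localization_constNonzero_eq_span_X_zero_of_pderiv_ne_zero
    {G : MvPolynomial (Fin 2) L} (hG0 : constantCoeff G = 0)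
    (hGY : constantCoeff (pderiv 1 G) ≠ 0) :
    maximalIdeal (Localization (constNonzero L)) =
      Ideal.span {algebraMap _ _ (X 0 : MvPolynomial (Fin 2) L), algebraMap _ _ G} := by
  obtain ⟨K, H, hG, hH⟩ := exists_eq_mul_X_add_mul_X hG0
  have hHunit : IsUnit (algebraMap _ (Localization (constNonzero L)) H) :=
    IsLocalization.map_units _ (⟨H, mem_constNonzero.mpr (hH ▸ hGY)⟩ : constNonzero L)
  rw [maximalIdeal_localization_constNonzero_eq_span_X]
  exact (Ideal.span_pair_eq_of_eq_mul_add_mul (by rw [hG, map_add, map_mul, map_mul]) hHunit).symm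

theorem disjoint_constNonzero_span_singleton {G : MvPolynomial (Fin 2) L}
    (hG0 : constantCoeff G = 0) :
    Disjoint (constNonzero L : Set (MvPolynomial (Fin 2) L)) (Ideal.span {G}) := by
  refine Set.disjoint_left.mpr fun f hf hfG => mem_constNonzero.mp hf ?_
  obtain ⟨c, rfl⟩ := Ideal.mem_span_singleton'.mp hfG
  simp [hG0]

theorem isPrime_span_algebraMap {G : MvPolynomial (Fin 2) L} (hG : Prime G)
    (hG0 : constantCoeff G = 0) :
    (Ideal.span {algebraMap _ (Localization (constNonzero L)) G}).IsPrime := by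
  rw [← Set.image_singleton, ← Ideal.map_span]
  exact IsLocalization.isPrime_of_isPrime_disjoint _ _ _
    ((Ideal.span_singleton_prime hG.ne_zero).mpr hG) (disjoint_constNonzero_span_singleton hG0)

theorem algebraMap_mem_span_algebraMap_iff {G : MvPolynomial (Fin 2) L} (hG : Prime G)
    (hG0 : constantCoeff G = 0) (f : MvPolynomial (Fin 2) L) :
    algebraMap _ (Localization (constNonzero L)) f ∈
      Ideal.span {algebraMap _ (Localization (constNonzero L)) G} ↔ G ∣ f := by
  rw [← Ideal.mem_span_singleton, ← IsLocalization.under_map_of_isPrime_disjoint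
    (constNonzero L) (Localization (constNonzero L))
    ((Ideal.span_singleton_prime hG.ne_zero).mpr hG)
    (disjoint_constNonzero_span_singleton hG0), Ideal.map_span, Set.image_singleton]
  rfl

end CurveLocalRing

theorem local_ring_at_nonsingular_point_is_DVR_with_uniformiser_X_general
    {L : Type*} [Field L]
    (G : MvPolynomial (Fin 2) L) (hGirr : Irreducible G)
    (hG0 : MvPolynomial.eval (fun _ => (0 : L)) G = 0)
    (hGY : MvPolynomial.eval (fun _ => (0 : L)) (MvPolynomial.pderiv 1 G) ≠ 0) :
    ∃ (hdom : IsDomain (curveLocalRing L G)) (hloc : IsLocalRing (curveLocalRing L G)),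
      @IsDiscreteValuationRing (curveLocalRing L G) _ hdom ∧
      @IsLocalRing.maximalIdeal (curveLocalRing L G) _ hloc =
        Ideal.span {Ideal.Quotient.mk _
          (algebraMap (MvPolynomial (Fin 2) L) (Localization (constNonzero L))
            (MvPolynomial.X 0))} := by
  rw [eval_zero'] at hG0 hGY
  have hGprime := hGirr.prime
  have := isPrime_span_algebraMap hGprime hG0
  have : IsLocalRing (curveLocalRing L G) := .of_surjective' _ Ideal.Quotient.mk_surjective
  have hm := maximalIdeal_quotient_span_singleton
    (maximalIdeal_localization_constNonzero_eq_span_X_zero_of_pderiv_ne_zero hG0 hGY)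
  refine ⟨inferInstance, inferInstance, .of_maximalIdeal_eq_span_singleton ?_ hm, hm⟩
  rw [Ne, Ideal.Quotient.eq_zero_iff_mem, algebraMap_mem_span_algebraMap_iff hGprime hG0]
  exact not_dvd_X_of_constantCoeff_pderiv_ne_zero (by decide) hG0 hGY

/-- Let `L` be an algebraically closed field and `G ∈ L[X,Y]` irreducible with
`G(0,0) = 0` and `∂G/∂Y(0,0) ≠ 0`.  Let `A = L[X,Y]/(G)` and let `m` be the maximal ideal
generated by the images of `X` and `Y`.  Then the localization `A_m` is a discrete valuation
ring whose maximal ideal is generated by the image of `X`, i.e. `X` is a uniformising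
parameter at the non-singular point `(0,0)` of the curve `G = 0`. -/
theorem local_ring_at_nonsingular_point_is_DVR_with_uniformiser_X
    {L : Type*} [Field L] [IsAlgClosed L]
    (G : MvPolynomial (Fin 2) L) (hGirr : Irreducible G)
    (hG0 : MvPolynomial.eval (fun _ => (0 : L)) G = 0)
    (hGY : MvPolynomial.eval (fun _ => (0 : L)) (MvPolynomial.pderiv 1 G) ≠ 0) :
    ∃ (hdom : IsDomain (curveLocalRing L G)) (hloc : IsLocalRing (curveLocalRing L G)),
      @IsDiscreteValuationRing (curveLocalRing L G) _ hdom ∧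
      @IsLocalRing.maximalIdeal (curveLocalRing L G) _ hloc =
        Ideal.span {Ideal.Quotient.mk _
          (algebraMap (MvPolynomial (Fin 2) L) (Localization (constNonzero L))
            (MvPolynomial.X 0))} :=
  local_ring_at_nonsingular_point_is_DVR_with_uniformiser_X_general G hGirr hG0 hGY
end

section
/- Let L be a perfect field of characteristic p > 0, let K be a finitely generated field extension of L of transcendence degree 1 (the function field of an algebraic curve over L), and fix an algebraic closure Ω of K. Then the subfield K^{1/p} = {x ∈ Ω : x^p ∈ K} is a field extension of K of degree exactly p. -/
open Polynomial IntermediateField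

lemma aux_not_mem_adjoin_pow {L K : Type*} [Field L] [Field K] [Algebra L K]
    {p : ℕ} (hp : p.Prime) {x : K} (hx : Transcendental L x) :
    x ∉ IntermediateField.adjoin L {x ^ p} := by
  intro hmem
  rw [IntermediateField.mem_adjoin_simple_iff] at hmem
  obtain ⟨r, s, hrs⟩ := hmem
  by_cases hs : (aeval (x ^ p)) s = 0
  · rw [hs, div_zero] at hrs
    exact hx (hrs ▸ isAlgebraic_zero)
  have hs0 : s ≠ 0 := fun h => hs (by simp [h])
  rw [eq_div_iff hs, ← Polynomial.expand_aeval, ← Polynomial.expand_aeval] at hrs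
  have h0 : aeval x (X * expand L p s - expand L p r) = 0 := by
    rw [map_sub, map_mul, aeval_X, ← hrs]
    ring
  have hpoly : X * expand L p s - expand L p r = 0 := by
    rw [transcendental_iff] at hx
    exact hx _ h0
  have hcoeff := congrArg (fun q => Polynomial.coeff q (p * s.natDegree + 1)) hpoly
  simp only [coeff_sub, coeff_zero] at hcoeff
  rw [Polynomial.coeff_X_mul, Polynomial.coeff_expand hp.pos,
    Polynomial.coeff_expand hp.pos] at hcoeff
  have hd1 : ¬ p ∣ p * s.natDegree + 1 := by
    intro h
    have : p ∣ 1 := (Nat.dvd_add_right ⟨s.natDegree, rfl⟩).mp h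
    exact hp.one_lt.ne' (Nat.dvd_one.mp this)
  rw [if_pos (dvd_refl _ |>.mul_right _), if_neg hd1, Nat.mul_div_cancel_left _ hp.pos,
    sub_zero] at hcoeff
  exact leadingCoeff_ne_zero.mpr hs0 hcoeff

/-- Let `L` be a perfect field of characteristic `p > 0`, let `K` be a
finitely generated field extension of `L` of transcendence degree `1` (the function field of an
algebraic curve over `L`), and fix an algebraic closure `Ω` of `K`.  Then the subfield
`K^{1/p} = {x ∈ Ω : x^p ∈ K}` is a field extension of `K` of degree exactly `p`. -/
theorem pth_root_field_of_function_field_has_degree_p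
    {L K Ω : Type*} [Field L] [Field K] [Field Ω]
    [Algebra L K] [Algebra K Ω]
    (p : ℕ) [Fact p.Prime] [CharP L p] [PerfectField L]
    [IsAlgClosed Ω] [Algebra.IsAlgebraic K Ω]
    (hfg : (⊤ : IntermediateField L K).FG)
    (x : K) (hx : IsTranscendenceBasis L (fun _ : Unit => x)) :
    ∃ E : IntermediateField K Ω,
      (∀ y : Ω, y ∈ E ↔ y ^ p ∈ (algebraMap K Ω).range) ∧
      Module.finrank K E = p := by
  have hp : p.Prime := Fact.out
  haveI : CharP K p := charP_of_injective_algebraMap (algebraMap L K).injective p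
  haveI : CharP Ω p := charP_of_injective_algebraMap (algebraMap K Ω).injective p
  haveI : ExpChar K p := .prime hp
  haveI : ExpChar Ω p := .prime hp
  haveI : ExpChar L p := .prime hp
  set ι : K →+* Ω := algebraMap K Ω with hι
  set ψ : K →+* K := frobenius K p with hψ
  set φ : Ω →+* Ω := frobenius Ω p with hφ
  have hφsurj : Function.Surjective φ := (frobeniusEquiv Ω p).surjective
  have hφinj : Function.Injective φ := frobenius_inj Ω p
  have hψinj : Function.Injective ψ := frobenius_inj K p
  -- the transcendental element
  have hxt : Transcendental L x := hx.1.transcendental (i := ())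
  -- intermediate fields of K over L
  set F : IntermediateField L K := IntermediateField.adjoin L {x} with hF
  set G : IntermediateField L K := IntermediateField.adjoin L {x ^ p} with hG
  have hxF : x ∈ F := IntermediateField.mem_adjoin_simple_self L x
  have hxpG : x ^ p ∈ G := IntermediateField.mem_adjoin_simple_self L (x ^ p)
  have hGF : G ≤ F := by
    rw [hG, IntermediateField.adjoin_le_iff]
    simpa using pow_mem hxF p
  have hxG : x ∉ G := aux_not_mem_adjoin_pow hp hxt
  -- K^p as an intermediate field of K over L
  have hKp_mem : ∀ l : L, algebraMap L K l ∈ ψ.fieldRange := by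
    intro l
    exact ⟨algebraMap L K ((frobeniusEquiv L p).symm l), by
      rw [hψ, frobenius_def, ← map_pow, frobeniusEquiv_symm_pow_p]⟩
  set Kp : IntermediateField L K := (ψ.fieldRange).toIntermediateField hKp_mem with hKp
  have hKp_toSubfield : Kp.toSubfield = (⊤ : Subfield K).map ψ := by
    rw [← RingHom.fieldRange_eq_map]; rfl
  -- G = F^p
  have hGFp : F.toSubfield.map ψ = G.toSubfield := by
    have hmem1 : ∀ l : L, algebraMap L K l ∈ G.toSubfield.comap ψ := fun l => by
      show ψ (algebraMap L K l) ∈ G.toSubfield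
      rw [hψ, frobenius_def]
      exact pow_mem (G.algebraMap_mem l) p
    have hmem2 : ∀ l : L, algebraMap L K l ∈ F.toSubfield.map ψ := fun l =>
      ⟨algebraMap L K ((frobeniusEquiv L p).symm l), F.algebraMap_mem _, by
        rw [hψ, frobenius_def, ← map_pow, frobeniusEquiv_symm_pow_p]⟩
    apply le_antisymm
    · have h1 : F ≤ (G.toSubfield.comap ψ).toIntermediateField hmem1 := by
        rw [hF, IntermediateField.adjoin_le_iff]
        intro y hy
        rw [Set.mem_singleton_iff] at hy; rw [hy]
        show ψ x ∈ G.toSubfield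
        rw [hψ, frobenius_def]
        exact hxpG
      intro y hy
      obtain ⟨z, hz, rfl⟩ := hy
      exact h1 hz
    · have h2 : G ≤ (F.toSubfield.map ψ).toIntermediateField hmem2 := by
        rw [hG, IntermediateField.adjoin_le_iff]
        intro y hy
        rw [Set.mem_singleton_iff] at hy; rw [hy]
        exact ⟨x, hxF, by rw [hψ, frobenius_def]⟩
      intro y hy
      exact h2 hy
  have hGKp : G ≤ Kp := by
    intro y hy
    have hy' : y ∈ F.toSubfield.map ψ := hGFp.symm ▸ hy
    obtain ⟨z, -, rfl⟩ := hy'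
    exact ⟨z, rfl⟩
  -- [F : G] = p
  have hGF_rank : IntermediateField.relfinrank G F = p := by
    rw [IntermediateField.relfinrank_eq_finrank_of_le hGF]
    have hadj : G ≤ IntermediateField.adjoin L {x} := hF ▸ hGF
    rw [IntermediateField.extendScalars_adjoin hadj]
    set g : ↥G := ⟨x ^ p, hxpG⟩ with hg
    have hxint : IsIntegral ↥G x := by
      refine ⟨X ^ p - C g, monic_X_pow_sub_C g hp.ne_zero, ?_⟩
      simp [hg]
    rw [IntermediateField.adjoin.finrank hxint]
    have hmin : minpoly ↥G x = X ^ p - C g := by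
      refine (minpoly.eq_of_irreducible_of_monic ?_ ?_ (monic_X_pow_sub_C g hp.ne_zero)).symm
      · refine X_pow_sub_C_irreducible_of_prime hp ?_
        intro b hb
        apply hxG
        have hb' : (b : K) ^ p = x ^ p := congrArg Subtype.val hb
        have : (b : K) = x := hψinj (by simpa [hψ, frobenius_def] using hb')
        exact this ▸ b.2
      · simp [hg]
    rw [hmin, natDegree_X_pow_sub_C]
  -- K is finite dimensional over F
  haveI halg := hx.isAlgebraic
  set A0 := Algebra.adjoin L (Set.range fun _ : Unit => x) with hA0
  have hA0F : A0 ≤ F.toSubalgebra := Algebra.adjoin_le_iff.mpr (by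
    rintro y ⟨_, rfl⟩; exact hxF)
  have hint : ∀ a : K, IsIntegral ↥F a := by
    intro a
    obtain ⟨q, hq0, hqa⟩ := (halg.isAlgebraic a : IsAlgebraic ↥A0 a)
    let g : ↥A0 →+* ↥F :=
      { toFun := fun a => ⟨a.1, hA0F a.2⟩
        map_one' := rfl
        map_mul' := fun _ _ => rfl
        map_zero' := rfl
        map_add' := fun _ _ => rfl }
    have hginj : Function.Injective g := fun a b hab => by have h2 := congrArg Subtype.val hab; exact Subtype.ext h2
    refine IsAlgebraic.isIntegral ⟨q.map g, ?_, ?_⟩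
    · exact (Polynomial.map_ne_zero_iff hginj).mpr hq0
    · have hcomp : (algebraMap ↥F K).comp (g : ↥A0 →+* ↥F) = algebraMap ↥A0 K :=
        RingHom.ext fun y => rfl
      rw [aeval_def, Polynomial.eval₂_map, hcomp, ← aeval_def]
      exact hqa
  haveI hFD : FiniteDimensional ↥F K := by
    obtain ⟨S, hS⟩ := hfg
    have htop : IntermediateField.adjoin ↥F ((S : Set K)) = ⊤ :=
      IntermediateField.adjoin_eq_top_of_adjoin_eq_top (F := L) (E := ↥F) hS
    haveI : FiniteDimensional ↥F (IntermediateField.adjoin ↥F ((S : Set K))) :=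
      IntermediateField.finiteDimensional_adjoin (fun a _ => hint a)
    rw [htop] at this
    exact (IntermediateField.topEquiv (F := ↥F) (E := K)).toLinearEquiv.finiteDimensional
  have hn_pos : 0 < IntermediateField.relfinrank F ⊤ := by
    rw [IntermediateField.relfinrank_top_right]
    exact Module.finrank_pos
  have hrel_GKp : IntermediateField.relfinrank G Kp = IntermediateField.relfinrank F ⊤ := by
    show Subfield.relfinrank G.toSubfield Kp.toSubfield
      = Subfield.relfinrank F.toSubfield (⊤ : IntermediateField L K).toSubfield
    rw [IntermediateField.top_toSubfield, ← hGFp, hKp_toSubfield]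
    exact Subfield.relfinrank_map_map _ _ ψ
  have hKp_rank : IntermediateField.relfinrank Kp ⊤ = p := by
    apply Nat.eq_of_mul_eq_mul_left hn_pos
    calc IntermediateField.relfinrank F ⊤ * IntermediateField.relfinrank Kp ⊤
        = IntermediateField.relfinrank G Kp * IntermediateField.relfinrank Kp ⊤ := by
          rw [hrel_GKp]
      _ = IntermediateField.relfinrank G ⊤ :=
          IntermediateField.relfinrank_mul_relfinrank hGKp le_top
      _ = IntermediateField.relfinrank G F * IntermediateField.relfinrank F ⊤ :=
          (IntermediateField.relfinrank_mul_relfinrank hGF le_top).symm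
      _ = IntermediateField.relfinrank F ⊤ * p := by rw [hGF_rank, mul_comm]
  have hKp_rank' : Subfield.relfinrank Kp.toSubfield (⊤ : Subfield K) = p := by
    rw [← IntermediateField.top_toSubfield (F := L) (E := K)]
    exact hKp_rank
  -- now pass to Ω
  set K' : Subfield Ω := ι.fieldRange with hK'
  have hK'mem : ∀ k : K, algebraMap K Ω k ∈ K'.comap φ := by
    intro k
    show φ (ι k) ∈ K'
    rw [hφ, frobenius_def, ← map_pow]
    exact ⟨k ^ p, rfl⟩
  refine ⟨(K'.comap φ).toIntermediateField hK'mem, ?_, ?_⟩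
  · intro y
    constructor
    · intro hy
      have : φ y ∈ K' := hy
      obtain ⟨k, hk⟩ := this
      exact ⟨k, by rwa [hφ, frobenius_def] at hk⟩
    · rintro ⟨k, hk⟩
      show φ y ∈ K'
      rw [hφ, frobenius_def]
      exact ⟨k, hk⟩
  · rw [← IntermediateField.relfinrank_bot_left]
    show Subfield.relfinrank (⊥ : IntermediateField K Ω).toSubfield _ = p
    rw [IntermediateField.bot_toSubfield]
    have hE : ((K'.comap φ).toIntermediateField hK'mem).toSubfield = K'.comap φ := by
      ext y; rfl
    rw [hE]
    have hcm : (K'.map φ).comap φ = K' := by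
      ext y
      constructor
      · rintro hy
        obtain ⟨z, hz, he⟩ := hy
        rwa [← hφinj he]
      · intro hy
        exact ⟨y, hy, rfl⟩
    have hmapK' : K'.map φ = Kp.toSubfield.map ι := by
      have hcomm : φ.comp ι = ι.comp ψ := RingHom.ext fun k => by
        simp [hφ, hψ, frobenius_def, map_pow]
      rw [hK', RingHom.fieldRange_eq_map, Subfield.map_map, hcomm, ← Subfield.map_map,
        ← hKp_toSubfield]
    calc Subfield.relfinrank K' (K'.comap φ)
        = Subfield.relfinrank ((K'.map φ).comap φ) (K'.comap φ) := by rw [hcm]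
      _ = Subfield.relfinrank (K'.map φ) K' :=
          Subfield.relfinrank_comap_comap_eq_relfinrank_of_surjective _ _ φ hφsurj
      _ = Subfield.relfinrank (Kp.toSubfield.map ι) ((⊤ : Subfield K).map ι) := by
          rw [hmapK', hK', RingHom.fieldRange_eq_map]
      _ = Subfield.relfinrank Kp.toSubfield (⊤ : Subfield K) :=
          Subfield.relfinrank_map_map _ _ ι
      _ = p := hKp_rank'
end

section
/- Let L be a perfect field of characteristic p > 0, let K be a finitely generated field extension of L of transcendence degree 1, and fix an algebraic closure Ω of K. If E is an intermediate field, K ⊆ E ⊆ Ω, which is a finite purely inseparable extension of K of degree p^n, then E = K^{1/p^n} = {x ∈ Ω : x^{p^n} ∈ K}. -/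
/-!
Write `K^q` for the image of `x ↦ x ^ q`. For `L` perfect, the field `M = L(x)` is generated over
`M^p ⊇ L` by `x`, so `[M : M^p] ≤ p`. Frobenius maps a finite extension `M ≤ K` isomorphically onto
`M^p ≤ K^p`, so comparing degrees along the two towers `M^p ≤ M ≤ K` and `M^p ≤ K^p ≤ K` gives
`[K : K^p] = [M : M^p] ≤ p`. It follows that `[K : K^{p^n}] ≤ p^n`, and, applying `x ↦ x ^ p ^ n`
inside the perfect field `Ω`, `[K^{1/p^n} : K] ≤ p^n`. A purely inseparable `E` of degree `p^n` has
exponent at most `n`, so `E ≤ K^{1/p^n}`, and the degree bound forces equality.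
-/

open Cardinal Polynomial
open scoped IntermediateField

universe u v

theorem Cardinal.eq_of_mul_eq_mul_right_of_lt_aleph0 {a b d : Cardinal} (hd : d ≠ 0)
    (hd' : d < ℵ₀) (h : a * d = b * d) : a = b := by
  have finite_iff (c : Cardinal) : c * d < ℵ₀ ↔ c < ℵ₀ := by
    rw [mul_lt_aleph0_iff]
    constructor
    · rintro (rfl | h0 | ⟨hc, -⟩)
      exacts [aleph0_pos, absurd h0 hd, hc]
    · exact fun hc => Or.inr (Or.inr ⟨hc, hd'⟩)
  rcases lt_or_ge a ℵ₀ with ha | ha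
  · have hb : b < ℵ₀ := (finite_iff b).1 (h ▸ (finite_iff a).2 ha)
    lift a to ℕ using ha
    lift b to ℕ using hb
    lift d to ℕ using hd'
    norm_cast at h hd ⊢
    exact Nat.eq_of_mul_eq_mul_right (Nat.pos_of_ne_zero hd) h
  · have hb : ℵ₀ ≤ b :=
      not_lt.1 fun hb => not_lt.2 ha ((finite_iff a).1 (h ▸ (finite_iff b).2 hb))
    rw [← mul_eq_left ha (hd'.le.trans ha) hd, h, mul_eq_left hb (hd'.le.trans hb) hd]

theorem IntermediateField.rank_adjoin_simple_le_of_pow_mem {F E : Type*} [Field F] [Field E]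
    [Algebra F E] {a : E} {n : ℕ} (hn : n ≠ 0) (ha : a ^ n ∈ (algebraMap F E).range) :
    Module.rank F F⟮a⟯ ≤ n := by
  obtain ⟨c, hc⟩ := ha
  have hmonic : (X ^ n - C c).Monic := monic_X_pow_sub_C c hn
  have hroot : aeval a (X ^ n - C c) = 0 := by simp [hc]
  have hint : IsIntegral F a := ⟨_, hmonic, by rwa [← aeval_def]⟩
  have := adjoin.finiteDimensional hint
  rw [← Module.finrank_eq_rank, adjoin.finrank hint, Nat.cast_le]
  simpa using natDegree_le_natDegree (minpoly.min F a hmonic hroot)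

section

variable {p : ℕ}

theorem IsPurelyInseparable.pow_mem_range_of_finrank_le {K E : Type*} [Field K] [Field E]
    [Algebra K E] [FiniteDimensional K E] [IsPurelyInseparable K E] [ExpChar K p] (hp : 1 < p)
    {n : ℕ} (hdeg : Module.finrank K E ≤ p ^ n) (a : E) :
    a ^ p ^ n ∈ (algebraMap K E).range := by
  have he : elemExponent K a ≤ n := (Nat.pow_le_pow_iff_right hp).1 <|
    minpoly_natDegree_eq' K p a ▸ (minpoly.natDegree_le a).trans hdeg
  rw [← Nat.sub_add_cancel he, pow_add, pow_mul']
  exact _root_.pow_mem (elemExponent_def' K p a) _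

namespace Subfield

variable {K : Type*} [Field K] (p) [ExpChar K p]

theorem map_frobenius_le (A : Subfield K) : A.map (frobenius K p) ≤ A := by
  rintro _ ⟨a, ha, rfl⟩
  exact pow_mem ha p

theorem relrank_map_frobenius_eq_of_le {A B : Subfield K} (h : A ≤ B)
    (hfin : A.relrank B < ℵ₀) :
    (B.map (frobenius K p)).relrank B = (A.map (frobenius K p)).relrank A := by
  have hne : A.relrank B ≠ 0 := by
    rw [relrank_eq_rank_of_le h]
    exact rank_pos.ne'
  refine Cardinal.eq_of_mul_eq_mul_right_of_lt_aleph0 hne hfin ?_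
  -- both sides are `[B : A^p]`, along `A^p ≤ B^p ≤ B` and along `A^p ≤ A ≤ B`
  rw [relrank_mul_relrank (map_frobenius_le p A) h, mul_comm,
    ← relrank_mul_relrank ((gc_map_comap _).monotone_l h) (map_frobenius_le p B), relrank_map_map]

variable {p}

theorem relrank_map_frobenius_adjoin_simple_le {L : Type*} [Field L] [Algebra L K] [ExpChar L p]
    [PerfectRing L p] (x : K) :
    (L⟮x⟯.toSubfield.map (frobenius K p)).relrank L⟮x⟯.toSubfield ≤ p := by
  set B := L⟮x⟯.toSubfield.map (frobenius K p)
  have hB : B ≤ L⟮x⟯.toSubfield := map_frobenius_le p _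
  have hLB : Set.range (algebraMap L K) ⊆ B := by
    rintro _ ⟨l, rfl⟩
    obtain ⟨l', rfl⟩ := surjective_frobenius L p l
    exact ⟨algebraMap L K l', L⟮x⟯.algebraMap_mem l', by simp [frobenius_def]⟩
  have hadjoin : extendScalars hB = B⟮x⟯ := by
    refine le_antisymm (fun y hy => ?_) (IntermediateField.adjoin_simple_le_iff.2 <|
      IntermediateField.mem_adjoin_simple_self L x)
    refine Subfield.closure_le.2 (Set.union_subset (hLB.trans fun b hb => ?_) ?_) hy
    · exact B⟮x⟯.algebraMap_mem ⟨b, hb⟩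
    · exact Set.singleton_subset_iff.2 (IntermediateField.mem_adjoin_simple_self B x)
  rw [relrank_eq_rank_of_le hB, hadjoin]
  exact IntermediateField.rank_adjoin_simple_le_of_pow_mem (expChar_pos K p).ne'
    ⟨⟨x ^ p, x, IntermediateField.mem_adjoin_simple_self L x, rfl⟩, rfl⟩

end Subfield

variable (p) in
theorem rank_iterateFrobenius_fieldRange (K : Type*) [Field K] [ExpChar K p] (n : ℕ) :
    Module.rank (iterateFrobenius K p n).fieldRange K =
      Module.rank (frobenius K p).fieldRange K ^ n := by
  simp only [← Subfield.relrank_top_right, RingHom.fieldRange_eq_map]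
  induction n with
  | zero =>
    rw [pow_zero, Subfield.relrank_eq_one_iff]
    exact fun y _ => ⟨y, trivial, iterateFrobenius_zero_apply K p y⟩
  | succ n ih =>
    have hsucc : (⊤ : Subfield K).map (iterateFrobenius K p (n + 1)) =
        ((⊤ : Subfield K).map (frobenius K p)).map (iterateFrobenius K p n) := by
      rw [iterateFrobenius_add, iterateFrobenius_one, Subfield.map_map]
    have hle : (⊤ : Subfield K).map (iterateFrobenius K p (n + 1)) ≤
        (⊤ : Subfield K).map (iterateFrobenius K p n) :=
      hsucc ▸ (Subfield.gc_map_comap _).monotone_l le_top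
    rw [← Subfield.relrank_mul_relrank hle le_top, ih, hsucc, Subfield.relrank_map_map,
      pow_succ, mul_comm]

theorem rank_frobenius_fieldRange_le_of_isTranscendenceBasis {L K : Type*} [Field L] [Field K]
    [Algebra L K] [ExpChar L p] [PerfectRing L p] [ExpChar K p]
    (hfg : (⊤ : IntermediateField L K).FG) {x : K}
    (hx : IsTranscendenceBasis L fun _ : Unit => x) :
    Module.rank (frobenius K p).fieldRange K ≤ p := by
  have hLx : IntermediateField.adjoin L (Set.range fun _ : Unit => x) = L⟮x⟯ := by
    rw [Set.range_const]
  have : Algebra.IsAlgebraic L⟮x⟯ K := hLx ▸ hx.isAlgebraic_field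
  have : Algebra.EssFiniteType L K := IntermediateField.fg_top_iff.1 hfg
  have : Algebra.EssFiniteType L⟮x⟯ K := .of_comp L L⟮x⟯ K
  have : Module.Finite L⟮x⟯ K := Algebra.finite_of_essFiniteType_of_isAlgebraic
  have hfin : L⟮x⟯.toSubfield.relrank ⊤ < ℵ₀ := by
    rw [Subfield.relrank_top_right]
    exact Module.rank_lt_aleph0 _ _
  rw [RingHom.fieldRange_eq_map, ← Subfield.relrank_top_right,
    Subfield.relrank_map_frobenius_eq_of_le p le_top hfin]
  exact Subfield.relrank_map_frobenius_adjoin_simple_le x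

variable (p) in
def pPowRoots (K : Type u) (Ω : Type v) [Field K] [Field Ω] [Algebra K Ω] [ExpChar Ω p]
    (n : ℕ) : IntermediateField K Ω :=
  ((algebraMap K Ω).fieldRange.comap (iterateFrobenius Ω p n)).toIntermediateField
    fun a => ⟨a ^ p ^ n, by simp [iterateFrobenius_def]⟩

theorem mem_pPowRoots {K : Type u} {Ω : Type v} [Field K] [Field Ω] [Algebra K Ω] [ExpChar Ω p]
    {n : ℕ} {y : Ω} : y ∈ pPowRoots p K Ω n ↔ y ^ p ^ n ∈ (algebraMap K Ω).range :=
  RingHom.mem_fieldRange.trans RingHom.mem_range.symm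

theorem lift_rank_pPowRoots (K : Type u) (Ω : Type v) [Field K] [Field Ω] [Algebra K Ω]
    [ExpChar K p] [ExpChar Ω p] [PerfectRing Ω p] (n : ℕ) :
    lift.{u} (Module.rank K (pPowRoots p K Ω n)) =
      lift.{v} (Module.rank (iterateFrobenius K p n).fieldRange K) := by
  set f := algebraMap K Ω
  set ψ := iterateFrobenius Ω p n
  have hcomm : ψ.comp f = f.comp (iterateFrobenius K p n) :=
    RingHom.ext fun k => (map_pow f k _).symm
  have hpow : f.fieldRange.map ψ = (iterateFrobenius K p n).fieldRange.map f := by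
    rw [RingHom.fieldRange_eq_map, RingHom.fieldRange_eq_map, Subfield.map_map,
      Subfield.map_map, hcomm]
  -- `ψ` carries `K ≤ K^{1/p^n}` onto `K^{p^n} ≤ K` inside `Ω`
  have hroots :
      Module.rank K (pPowRoots p K Ω n) = (f.fieldRange.map ψ).relrank f.fieldRange := by
    rw [← IntermediateField.relrank_bot_left, IntermediateField.relrank,
      IntermediateField.bot_toSubfield, ← Subfield.relrank_map_map _ _ ψ]
    congr 1
    exact Subfield.map_comap_eq_self_of_surjective (bijective_iterateFrobenius Ω p n).2 _
  rw [hroots, ← Subfield.lift_rank_comap, hpow, Subfield.comap_map]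

end

theorem purely_inseparable_extension_eq_pn_th_root_field_general
    {L K Ω : Type*} [Field L] [Field K] [Field Ω]
    [Algebra L K] [Algebra K Ω]
    (p : ℕ) [Fact p.Prime] [CharP L p] [PerfectField L]
    [IsAlgClosed Ω]
    (hfg : (⊤ : IntermediateField L K).FG)
    (x : K) (hx : IsTranscendenceBasis L (fun _ : Unit => x))
    (E : IntermediateField K Ω) [FiniteDimensional K E]
    [IsPurelyInseparable K E] (n : ℕ)
    (hdeg : Module.finrank K E = p ^ n) :
    ∀ y : Ω, y ∈ E ↔ y ^ (p ^ n) ∈ (algebraMap K Ω).range := by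
  have : ExpChar K p := expChar_of_injective_algebraMap (algebraMap L K).injective p
  have : ExpChar Ω p := expChar_of_injective_algebraMap (algebraMap K Ω).injective p
  have hrank : Module.rank K (pPowRoots p K Ω n) ≤ (p ^ n : ℕ) := by
    refine lift_le_nat_iff.1 ?_
    rw [lift_rank_pPowRoots, lift_le_nat_iff, rank_iterateFrobenius_fieldRange, Nat.cast_pow]
    exact pow_le_pow_left₀ zero_le
      (rank_frobenius_fieldRange_le_of_isTranscendenceBasis hfg hx) n
  have : FiniteDimensional K (pPowRoots p K Ω n) :=
    Module.rank_lt_aleph0_iff.1 (hrank.trans_lt natCast_lt_aleph0)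
  have hE : E ≤ pPowRoots p K Ω n := fun y hy => by
    obtain ⟨c, hc⟩ := IsPurelyInseparable.pow_mem_range_of_finrank_le
      (Fact.out : p.Prime).one_lt hdeg.le (⟨y, hy⟩ : E)
    exact mem_pPowRoots.2 ⟨c, congrArg Subtype.val hc⟩
  have hEq := IntermediateField.eq_of_le_of_finrank_le hE
    (hdeg ▸ Module.finrank_le_of_rank_le hrank)
  intro y
  rw [hEq, mem_pPowRoots]

/-- Let `L` be a perfect field of characteristic `p > 0`, let `K` be a
finitely generated field extension of `L` of transcendence degree `1`, and fix an algebraic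
closure `Ω` of `K`.  If `E` with `K ⊆ E ⊆ Ω` is a finite purely inseparable extension of `K`
of degree `p^n`, then `E = K^{1/pⁿ} = {x ∈ Ω : x^{pⁿ} ∈ K}`. -/
theorem purely_inseparable_extension_eq_pn_th_root_field
    {L K Ω : Type*} [Field L] [Field K] [Field Ω]
    [Algebra L K] [Algebra K Ω]
    (p : ℕ) [Fact p.Prime] [CharP L p] [PerfectField L]
    [IsAlgClosed Ω] [Algebra.IsAlgebraic K Ω]
    (hfg : (⊤ : IntermediateField L K).FG)
    (x : K) (hx : IsTranscendenceBasis L (fun _ : Unit => x))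
    (E : IntermediateField K Ω) [FiniteDimensional K E]
    [IsPurelyInseparable K E] (n : ℕ)
    (hdeg : Module.finrank K E = p ^ n) :
    ∀ y : Ω, y ∈ E ↔ y ^ (p ^ n) ∈ (algebraMap K Ω).range :=
  purely_inseparable_extension_eq_pn_th_root_field_general p hfg x hx E n hdeg
end
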